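/- For every integer r ≥ 1, the following identity holds in the field of rational functions ℚ(q): substituting q ↦ −q in q^{r²−r} · [2r−1 choose r]_{q²} / [2r−1]_q yields q^{r²−r} · [2r−1]_q · C_{r−1}(q²); in particular T_r(2r−1,−q) = q^{r²−r}·[2r−1]_q·C_{r−1}(q²) is a polynomial with only nonnegative coefficients. -/

import Mathlib

open Polynomial

/-- The q-integer `[n]_q = 1 + q + ⋯ + q^{n−1}` as a polynomial in `ℤ[q]`
(with `[0]_q = 0`). -/
noncomputable def qIntP (n : ℕ) : Polynomial ℤ := ∑ i ∈ Finset.range n, Polynomial.X ^ i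

/-- The q-factorial `[n]_q! = [1]_q[2]_q⋯[n]_q` in `ℤ[q]`. -/
noncomputable def qFactP (n : ℕ) : Polynomial ℤ := ∏ i ∈ Finset.range n, qIntP (i + 1)

/-- The Gaussian binomial coefficient `[m choose k]_q = [m]_q!/([k]_q![m−k]_q!)`
as a polynomial in `ℤ[q]` (the division, by a monic polynomial, is exact),
and `0` if `k > m`. -/
noncomputable def qBinomP (m k : ℕ) : Polynomial ℤ :=
  if k ≤ m then qFactP m /ₘ (qFactP k * qFactP (m - k)) else 0

/-- The Gaussian binomial coefficient `[m choose k]_{q²}`, i.e. `[m choose k]_q`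
with `q` replaced by `q²`. -/
noncomputable def qBinomP2 (m k : ℕ) : Polynomial ℤ := (qBinomP m k).comp (Polynomial.X ^ 2)

/-- The q-Catalan number `C_n(q) = (1/[n+1]_q)·[2n choose n]_q` as a polynomial
in `ℤ[q]` (the division, by a monic polynomial, is exact). -/
noncomputable def qCatalanP (n : ℕ) : Polynomial ℤ := qBinomP (2 * n) n /ₘ qIntP (n + 1)

/-!
Since `r² − r` is even and `[N]_{−q}·[N]_q = [N]_{q²}` for odd `N = 2r − 1`, substituting
`q ↦ −q` in `[N]_q·T = q^{r²−r}·[N choose r]_{q²}` and multiplying by `[N]_q` gives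
`[N]_{q²}·T(−q) = q^{r²−r}·[N]_q·[N choose r]_{q²}`. The absorption identities for
Gaussian binomials give `[2n+1 choose n+1]_q = [2n+1]_q·C_n(q)` and
`C_n(q) = [2n choose n]_q − q·[2n choose n−1]_q`, so `[N]_{q²}` cancels. This last
difference has nonnegative coefficients, as do `[m choose k+1]_q − [m choose k]_q` below
the middle; both are proved together by induction on `m` from the two q-Pascal recurrences.

Polynomials with nonnegative coefficients are handled as `lifts (Nat.castRingHom ℤ)`, the
image of `ℕ[X]`: a subsemiring closed under composition.
-/

theorem qIntP_zero : qIntP 0 = 0 := rfl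

theorem qIntP_succ (n : ℕ) : qIntP (n + 1) = qIntP n + X ^ n := Finset.sum_range_succ _ _

theorem qIntP_add (a b : ℕ) : qIntP (a + b) = qIntP a + X ^ a * qIntP b := by
  induction b with
  | zero => simp [qIntP_zero]
  | succ b ih => rw [← add_assoc, qIntP_succ, ih, qIntP_succ, pow_add]; ring

theorem qIntP_succ' (n : ℕ) : qIntP (n + 1) = 1 + X * qIntP n := by
  rw [add_comm, qIntP_add]; simp [qIntP]

theorem qIntP_monic {n : ℕ} (hn : n ≠ 0) : (qIntP n).Monic := monic_geom_sum_X hn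

theorem qFactP_succ (n : ℕ) : qFactP (n + 1) = qFactP n * qIntP (n + 1) :=
  Finset.prod_range_succ _ _

theorem qFactP_monic (n : ℕ) : (qFactP n).Monic :=
  monic_prod_of_monic _ _ fun i _ => qIntP_monic i.succ_ne_zero

theorem qFactP_ne_zero (n : ℕ) : qFactP n ≠ 0 := (qFactP_monic n).ne_zero

theorem qIntP_comp_mul_sub_one (n : ℕ) (p : ℤ[X]) : (qIntP n).comp p * (p - 1) = p ^ n - 1 := by
  simp only [qIntP, ← geom_sum_mul, comp, eval₂_finsetSum, eval₂_X_pow]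

/-- The Gaussian binomial via the q-Pascal recurrence, avoiding the division in `qBinomP`. -/
noncomputable def gaussBinom : ℕ → ℕ → ℤ[X]
  | _, 0 => 1
  | 0, _ + 1 => 0
  | n + 1, k + 1 => gaussBinom n k + X ^ (k + 1) * gaussBinom n (k + 1)

@[simp] theorem gaussBinom_zero_right (n : ℕ) : gaussBinom n 0 = 1 := by cases n <;> rfl

theorem gaussBinom_succ_succ (n k : ℕ) :
    gaussBinom (n + 1) (k + 1) = gaussBinom n k + X ^ (k + 1) * gaussBinom n (k + 1) := rfl

theorem gaussBinom_eq_zero_of_lt {n k : ℕ} (h : n < k) : gaussBinom n k = 0 := by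
  induction n generalizing k with
  | zero => obtain ⟨k, rfl⟩ := Nat.exists_eq_succ_of_ne_zero h.ne'; rfl
  | succ n ih =>
    obtain ⟨k, rfl⟩ := Nat.exists_eq_succ_of_ne_zero (Nat.ne_zero_of_lt h)
    rw [gaussBinom_succ_succ, ih (by omega), ih (by omega), mul_zero, add_zero]

theorem gaussBinom_mul_qFactP_mul_qFactP {n k l : ℕ} (h : k + l = n) :
    gaussBinom n k * qFactP k * qFactP l = qFactP n := by
  subst h
  induction k generalizing l with
  | zero => simp [qFactP]
  | succ k ihk =>
    induction l with
    | zero =>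
      have h := ihk (l := 0)
      simp only [add_zero, qFactP, Finset.range_zero, Finset.prod_empty, mul_one] at h ⊢
      rw [gaussBinom_succ_succ, gaussBinom_eq_zero_of_lt k.lt_succ_self, Finset.prod_range_succ]
      linear_combination qIntP (k + 1) * h
    | succ l ihl =>
      have hk := ihk (l := l + 1)
      rw [show k + 1 + l = k + (l + 1) by ring] at ihl
      rw [show k + 1 + (l + 1) = k + (l + 1) + 1 by ring, gaussBinom_succ_succ,
        qFactP_succ (k + (l + 1))]
      rw [qFactP_succ k, qFactP_succ l] at *
      have hq := qIntP_add (k + 1) (l + 1)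
      rw [show k + 1 + (l + 1) = k + (l + 1) + 1 by ring] at hq
      linear_combination qIntP (k + 1) * hk + X ^ (k + 1) * qIntP (l + 1) * ihl
        - qFactP (k + (l + 1)) * hq

theorem gaussBinom_symm {n k l : ℕ} (h : k + l = n) : gaussBinom n k = gaussBinom n l := by
  have h1 := gaussBinom_mul_qFactP_mul_qFactP h
  have h2 := gaussBinom_mul_qFactP_mul_qFactP ((add_comm l k).trans h)
  apply mul_right_cancel₀ (mul_ne_zero (qFactP_ne_zero k) (qFactP_ne_zero l))
  linear_combination h1 - h2

theorem qBinomP_eq_gaussBinom {n k : ℕ} (h : k ≤ n) : qBinomP n k = gaussBinom n k := by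
  rw [qBinomP, if_pos h, ← gaussBinom_mul_qFactP_mul_qFactP (Nat.add_sub_of_le h), mul_assoc,
    mul_comm]
  exact mul_divByMonic_cancel_left _ ((qFactP_monic k).mul (qFactP_monic (n - k)))

theorem gaussBinom_succ_right_eq (n k : ℕ) :
    gaussBinom n (k + 1) * qIntP (k + 1) = gaussBinom n k * qIntP (n - k) := by
  rcases lt_or_ge k n with h | h
  · obtain ⟨l, rfl⟩ : ∃ l, n = k + 1 + l := ⟨n - k - 1, by omega⟩
    have h1 := gaussBinom_mul_qFactP_mul_qFactP (rfl : k + 1 + l = _)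
    have h2 := gaussBinom_mul_qFactP_mul_qFactP (show k + (l + 1) = k + 1 + l by ring)
    rw [show k + 1 + l - k = l + 1 by omega]
    rw [qFactP_succ] at h1 h2
    apply mul_right_cancel₀ (mul_ne_zero (qFactP_ne_zero k) (qFactP_ne_zero l))
    linear_combination h1 - h2
  · rw [gaussBinom_eq_zero_of_lt (by omega), Nat.sub_eq_zero_of_le h, qIntP_zero, zero_mul,
      mul_zero]

theorem qIntP_succ_mul_gaussBinom (n k : ℕ) :
    qIntP (n + 1) * gaussBinom n k = gaussBinom (n + 1) (k + 1) * qIntP (k + 1) := by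
  rcases le_or_gt k n with h | h
  · obtain ⟨l, rfl⟩ := Nat.exists_eq_add_of_le h
    have h1 := gaussBinom_mul_qFactP_mul_qFactP (show k + 1 + l = k + l + 1 by ring)
    have h2 := gaussBinom_mul_qFactP_mul_qFactP (rfl : k + l = _)
    rw [qFactP_succ, qFactP_succ (k + l)] at h1
    apply mul_right_cancel₀ (mul_ne_zero (qFactP_ne_zero k) (qFactP_ne_zero l))
    linear_combination qIntP (k + l + 1) * h2 - h1
  · rw [gaussBinom_eq_zero_of_lt h, gaussBinom_eq_zero_of_lt (by omega), mul_zero, zero_mul]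

theorem gaussBinom_succ_succ' {n k d : ℕ} (h : k + d + 1 = n) :
    gaussBinom (n + 1) (k + 1) = gaussBinom n (k + 1) + X ^ (d + 1) * gaussBinom n k := by
  rw [gaussBinom_symm (show k + 1 + (d + 1) = n + 1 by omega), gaussBinom_succ_succ,
    gaussBinom_symm (show d + (k + 1) = n by omega), gaussBinom_symm (show d + 1 + k = n by omega)]

theorem comp_mem_lifts {R S : Type*} [Semiring R] [Semiring S] {f : R →+* S} {p q : S[X]}
    (hp : p ∈ lifts f) (hq : q ∈ lifts f) : p.comp q ∈ lifts f := by
  obtain ⟨p, rfl⟩ := (mem_lifts _).1 hp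
  obtain ⟨q, rfl⟩ := (mem_lifts _).1 hq
  exact (mem_lifts _).2 ⟨p.comp q, map_comp f p q⟩

theorem coeff_nonneg_of_mem_lifts {S : Type*} [Semiring S] [PartialOrder S] [IsOrderedRing S]
    {p : S[X]} (hp : p ∈ lifts (Nat.castRingHom S)) (i : ℕ) : 0 ≤ p.coeff i := by
  obtain ⟨m, hm⟩ := (lifts_iff_coeff_lifts p).1 hp i
  rw [← hm]
  exact Nat.cast_nonneg m

theorem qIntP_mem_lifts (n : ℕ) : qIntP n ∈ lifts (Nat.castRingHom ℤ) :=
  Subsemiring.sum_mem _ fun i _ => X_pow_mem_lifts _ i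

theorem gaussBinom_mem_lifts (n k : ℕ) : gaussBinom n k ∈ lifts (Nat.castRingHom ℤ) := by
  induction n generalizing k with
  | zero => cases k <;> simp [gaussBinom]
  | succ n ih =>
    cases k with
    | zero => simp
    | succ k => exact add_mem (ih k) (mul_mem (X_pow_mem_lifts _ _) (ih (k + 1)))

/-- Each q-Pascal recurrence writes one difference at level `n + 1` as a nonnegative
combination of both differences at level `n`. -/
theorem gaussBinom_succ_sub_mem_lifts (n : ℕ) : ∀ k : ℕ,
    (2 * k + 1 ≤ n → gaussBinom n (k + 1) - gaussBinom n k ∈ lifts (Nat.castRingHom ℤ)) ∧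
      (2 * k + 2 ≤ n →
        gaussBinom n (k + 1) - X * gaussBinom n k ∈ lifts (Nat.castRingHom ℤ)) := by
  induction n with
  | zero => intro k; omega
  | succ n ih =>
    intro k
    constructor
    · intro hk
      rcases k with _ | k
      · rw [gaussBinom_succ_succ, gaussBinom_zero_right, gaussBinom_zero_right, zero_add, pow_one,
          add_sub_cancel_left]
        exact mul_mem (X_mem_lifts _) (gaussBinom_mem_lifts n 1)
      rcases eq_or_lt_of_le hk with hn | hn
      · rw [gaussBinom_symm (show k + 1 + 1 + (k + 1) = n + 1 by omega), sub_self]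
        exact zero_mem _
      obtain ⟨d, hd⟩ : ∃ d, k + 1 + d + 1 = n := ⟨n - k - 2, by omega⟩
      rw [gaussBinom_succ_succ' hd, gaussBinom_succ_succ' (show k + (d + 1) + 1 = n by omega)]
      have hA := (ih (k + 1)).1 (by omega)
      have hB := (ih k).2 (by omega)
      convert add_mem hA (mul_mem (X_pow_mem_lifts _ (d + 1)) hB) using 1
      ring
    · intro hk
      rcases k with _ | k
      · have hA := (ih 0).1 (by omega)
        simp only [gaussBinom_succ_succ, gaussBinom_zero_right, zero_add] at hA ⊢
        convert add_mem (one_mem _) (mul_mem (X_mem_lifts _) hA) using 1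
        ring
      have hA := (ih (k + 1)).1 (by omega)
      have hB := (ih k).2 (by omega)
      rw [gaussBinom_succ_succ n (k + 1), gaussBinom_succ_succ n k]
      convert add_mem (mul_mem (X_pow_mem_lifts _ (k + 2)) hA) hB using 1
      ring

theorem qIntP_succ_mul_gaussBinom_sub (n : ℕ) :
    qIntP (n + 1) * (gaussBinom (2 * n) n - X * gaussBinom (2 * n) (n + 1)) =
      gaussBinom (2 * n) n := by
  have h := gaussBinom_succ_right_eq (2 * n) n
  rw [show 2 * n - n = n by omega] at h
  linear_combination gaussBinom (2 * n) n * qIntP_succ' n - X * h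

theorem qCatalanP_eq_gaussBinom_sub (n : ℕ) :
    qCatalanP n = gaussBinom (2 * n) n - X * gaussBinom (2 * n) (n + 1) :=
  calc qCatalanP n
      = qIntP (n + 1) * (gaussBinom (2 * n) n - X * gaussBinom (2 * n) (n + 1)) /ₘ
          qIntP (n + 1) := by
        rw [qCatalanP, qBinomP_eq_gaussBinom (by omega), qIntP_succ_mul_gaussBinom_sub]
    _ = _ := mul_divByMonic_cancel_left _ (qIntP_monic n.succ_ne_zero)

theorem qIntP_two_mul_add_one_mul_qCatalanP (n : ℕ) :
    qIntP (2 * n + 1) * qCatalanP n = gaussBinom (2 * n + 1) (n + 1) := by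
  have h1 := qIntP_succ_mul_gaussBinom_sub n
  rw [← qCatalanP_eq_gaussBinom_sub] at h1
  have h2 := qIntP_succ_mul_gaussBinom (2 * n) n
  apply mul_left_cancel₀ (qIntP_monic n.succ_ne_zero).ne_zero
  linear_combination qIntP (2 * n + 1) * h1 + h2

theorem qCatalanP_mem_lifts (n : ℕ) : qCatalanP n ∈ lifts (Nat.castRingHom ℤ) := by
  rw [qCatalanP_eq_gaussBinom_sub]
  rcases n with _ | n
  · simp [gaussBinom_eq_zero_of_lt]
  rw [gaussBinom_symm (show n + 1 + 1 + n = 2 * (n + 1) by ring)]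
  exact (gaussBinom_succ_sub_mem_lifts _ n).2 (by omega)

theorem qIntP_comp_neg_X_mul_qIntP {n : ℕ} (hn : Odd n) :
    (qIntP n).comp (-X) * qIntP n = (qIntP n).comp (X ^ 2) := by
  have h1 := qIntP_comp_mul_sub_one n (-X)
  have h2 := qIntP_comp_mul_sub_one n X
  have h3 := qIntP_comp_mul_sub_one n (X ^ 2)
  rw [comp_X] at h2
  rw [hn.neg_pow] at h1
  apply mul_right_cancel₀ (X_pow_sub_C_ne_zero two_pos (1 : ℤ))
  rw [C_1]
  linear_combination -(qIntP n * (X - 1)) * h1 + (X ^ n + 1) * h2 - h3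

theorem comp_neg_X_eq_of_qIntP_mul_eq {n e : ℕ} {T Q : ℤ[X]} (hn : Odd n) (he : Even e)
    (h : qIntP n * T = X ^ e * (qIntP n * Q).comp (X ^ 2)) :
    T.comp (-X) = X ^ e * qIntP n * Q.comp (X ^ 2) := by
  have h' := congrArg (·.comp (-X)) h
  simp only [mul_comp, pow_comp, X_comp, he.neg_pow, comp_assoc, neg_sq] at h'
  apply mul_left_cancel₀ ((qIntP_monic hn.pos.ne').comp (monic_X_pow 2) (by simp)).ne_zero
  linear_combination qIntP n * h' - T.comp (-X) * qIntP_comp_neg_X_mul_qIntP hn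

/-- For `r ≥ 1`: substituting `q ↦ −q` in
`T_r(2r−1,q) = q^{r²−r}·[2r−1 choose r]_{q²}/[2r−1]_q` (the polynomial `T`
determined by `[2r−1]_q·T(q) = q^{r²−r}·[2r−1 choose r]_{q²}`) yields
`q^{r²−r}·[2r−1]_q·C_{r−1}(q²)`; in particular `T_r(2r−1,−q)` is a polynomial
with only nonnegative coefficients. -/
theorem Tr_at_neg_q (r : ℕ) (hr : 1 ≤ r) (T : Polynomial ℤ)
    (hT : qIntP (2 * r - 1) * T = Polynomial.X ^ (r ^ 2 - r) * qBinomP2 (2 * r - 1) r) :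
    T.comp (-Polynomial.X) =
        Polynomial.X ^ (r ^ 2 - r) * qIntP (2 * r - 1) *
          (qCatalanP (r - 1)).comp (Polynomial.X ^ 2) ∧
      ∀ i : ℕ, 0 ≤ (T.comp (-Polynomial.X)).coeff i := by
  have he : Even (r ^ 2 - r) := by rw [sq, ← Nat.mul_sub_one]; exact Nat.even_mul_pred_self r
  obtain ⟨s, rfl⟩ : ∃ s, r = s + 1 := ⟨r - 1, by omega⟩
  rw [show 2 * (s + 1) - 1 = 2 * s + 1 by omega] at hT ⊢
  rw [qBinomP2, qBinomP_eq_gaussBinom (by omega), ← qIntP_two_mul_add_one_mul_qCatalanP] at hT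
  have hneg := comp_neg_X_eq_of_qIntP_mul_eq (odd_two_mul_add_one s) he hT
  refine ⟨by rw [hneg, Nat.add_sub_cancel], coeff_nonneg_of_mem_lifts ?_⟩
  rw [hneg]
  exact mul_mem (mul_mem (X_pow_mem_lifts _ _) (qIntP_mem_lifts _))
    (comp_mem_lifts (qCatalanP_mem_lifts s) (X_pow_mem_lifts _ 2))
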